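/- Let X be a quasigeodesic metric space of bounded geometry (for example, a connected graph whose vertex degrees are uniformly bounded, with its path metric). Then: (i) if lim_{l→∞} (1/l) log (sup_{x∈X} |B(x,l)|) = 0, then h_∞(X) = 0; (ii) if limsup_{l→∞} (1/l) log (sup_{x∈X} |B(x,l)|) > 0, then h_∞(X) = ∞. -/

import Mathlib

open Filter Set Metric
open scoped ENNReal

noncomputable section

/-- `p` represents a `δ`-pseudoorbit of `f` of length `n` starting at `x₀`:
`(p 0, p 1, …, p n)` with `p 0 = x₀` and `dist (f (p i)) (p (i+1)) ≤ δ` for `i < n`.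
(Only the values `p 0, …, p n` are relevant.) -/
def IsPseudoOrbit {X : Type*} [MetricSpace X] (f : X → X) (δ : ℝ) (n : ℕ) (x₀ : X)
    (p : ℕ → X) : Prop :=
  p 0 = x₀ ∧ ∀ i < n, dist (f (p i)) (p (i + 1)) ≤ δ

/-- The distance between two pseudoorbits of length `n`:
the maximum of `dist (p i) (q i)` over `0 ≤ i ≤ n`. -/
def orbitDist {X : Type*} [MetricSpace X] (n : ℕ) (p q : ℕ → X) : ℝ :=
  (Finset.range (n + 1)).sup' (by simp) fun i => dist (p i) (q i)

/-- A family `S` of pseudoorbits of length `n` is `R`-separated if any two distinct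
members are at pseudoorbit distance at least `R`. -/
def IsSepFamily {X : Type*} [MetricSpace X] (n : ℕ) (R : ℝ) (S : Set (ℕ → X)) : Prop :=
  ∀ p ∈ S, ∀ q ∈ S, p ≠ q → R ≤ orbitDist n p q

/-- `sepCard f n R δ x₀` is `s(f,n,R,δ,x₀)`: the supremum of cardinalities of
`R`-separated sets of `δ`-pseudoorbits of `f` of length `n` starting at `x₀`. -/
def sepCard {X : Type*} [MetricSpace X] (f : X → X) (n : ℕ) (R δ : ℝ) (x₀ : X) : ℝ≥0∞ :=
  ⨆ (S : Set (ℕ → X)) (_ : ∀ p ∈ S, IsPseudoOrbit f δ n x₀ p) (_ : IsSepFamily n R S),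
    (S.encard : ℝ≥0∞)

/-- Extended logarithm `[0,∞] → [0,∞]` (negative values are truncated to `0`). -/
def elog (x : ℝ≥0∞) : ℝ≥0∞ :=
  if x = ⊤ then ⊤ else ENNReal.ofReal (Real.log x.toReal)

/-- The coarse entropy of `f : X → X` computed at the basepoint `x₀`:
`h_∞(f) = lim_{δ→∞} lim_{R→∞} limsup_{n→∞} (1/n) log s(f,n,R,δ,x₀)`.
Since `s` is nondecreasing in `δ` and nonincreasing in `R`, the limits in `δ` and `R`
are the supremum over `δ > 0` and the infimum over `R > 0`, respectively. -/
def coarseEntropyAt {X : Type*} [MetricSpace X] (f : X → X) (x₀ : X) : ℝ≥0∞ :=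
  ⨆ (δ : ℝ) (_ : 0 < δ), ⨅ (R : ℝ) (_ : 0 < R),
    Filter.atTop.limsup fun n : ℕ => elog (sepCard f n R δ x₀) / (n : ℝ≥0∞)

end

/-- A metric space `X` is quasigeodesic. -/
def IsQuasiGeodesicSpace (X : Type*) [MetricSpace X] : Prop :=
  ∃ C A : ℝ, 1 ≤ C ∧ 0 ≤ A ∧ ∀ x x' : X, ∃ p : ℝ → X,
    p 0 = x ∧ p (dist x x') = x' ∧
    ∀ s ∈ Set.Icc (0 : ℝ) (dist x x'), ∀ t ∈ Set.Icc (0 : ℝ) (dist x x'),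
      C⁻¹ * |s - t| - A ≤ dist (p s) (p t) ∧ dist (p s) (p t) ≤ C * |s - t| + A

/-- A metric space has bounded geometry if for every radius `r > 0` there is a uniform
bound `C(r) ∈ ℕ` on the cardinalities of closed balls of radius `r`. -/
def HasBoundedGeometry (X : Type*) [MetricSpace X] : Prop :=
  ∀ r : ℝ, 0 < r → ∃ C : ℕ, ∀ x : X, (Metric.closedBall x r).encard ≤ C

/-!
(i) Two `δ`-paths that agree at every `m`-th step stay `2mδ`-close, so for `R > 2mδ` an
`R`-separated family of `δ`-paths of length `n` injects into the `mδ`-chains with `n / m` steps,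
of which there are at most `(sup_x |B(x, mδ)|) ^ (n / m)`. Hence `h_∞ ≤ log sup_x |B(x, mδ)| / m`
for every `m`, and this tends to `0` when the growth is subexponential.

(ii) Sampling quasigeodesics every `T` gives `(C T + A)`-paths from `u` to `v` with
`dist u v / T` steps. If `|B(xc, l)| > exp (c l)`, a maximal `R`-separated subset `D` of this ball
has more than `exp (c l) / C(R)` points, and tracing the words of length `k` in `D` by loops
from `xc` of `2 ⌈l / T⌉` steps gives `|D| ^ k` pairwise `R`-separated paths of length
`≈ 2 k l / T`. Hence `h_∞ ≥ c T / 16` for every `T`.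
-/

lemma elog_le_ofReal_iff {x : ℝ≥0∞} {a : ℝ} (ha : 0 ≤ a) :
    elog x ≤ ENNReal.ofReal a ↔ x ≤ ENNReal.ofReal (Real.exp a) := by
  rcases eq_or_ne x ⊤ with rfl | hx
  · simp [elog]
  rw [elog, if_neg hx, ENNReal.ofReal_le_ofReal_iff ha,
    ENNReal.le_ofReal_iff_toReal_le hx (Real.exp_pos a).le]
  rcases (ENNReal.toReal_nonneg (a := x)).eq_or_lt with h0 | hpos
  · simp [← h0, ha, (Real.exp_pos a).le]
  · exact Real.log_le_iff_le_exp hpos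

lemma elog_mono : Monotone elog := by
  intro x y hxy
  rcases eq_or_ne y ⊤ with rfl | hy
  · simp [elog]
  have hx : x ≠ ⊤ := ne_top_of_le_ne_top hy hxy
  rw [elog, elog, if_neg hx, if_neg hy]
  rcases (ENNReal.toReal_nonneg (a := x)).eq_or_lt with h0 | hpos
  · simp [← h0]
  · exact ENNReal.ofReal_le_ofReal (Real.log_le_log hpos (ENNReal.toReal_mono hy hxy))

lemma elog_pow (x : ℝ≥0∞) (k : ℕ) : elog (x ^ k) = k * elog x := by
  rcases eq_or_ne x ⊤ with rfl | hx
  · rcases k with _ | k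
    · simp [elog]
    · simp [elog, ENNReal.top_pow]
  rw [elog, elog, if_neg hx, if_neg (ENNReal.pow_ne_top hx), ENNReal.toReal_pow, Real.log_pow,
    ENNReal.ofReal_mul (Nat.cast_nonneg k), ENNReal.ofReal_natCast]

lemma encard_biUnion_le_encard_mul {α ι : Type*} {t : Set ι} (ht : t.Finite) (s : ι → Set α)
    {C : ℝ≥0∞} (hC : ∀ i ∈ t, ((s i).encard : ℝ≥0∞) ≤ C) :
    ((⋃ i ∈ t, s i).encard : ℝ≥0∞) ≤ t.encard * C := by
  have hsum := ht.toFinset.set_encard_biUnion_le s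
  simp only [Finite.mem_toFinset] at hsum
  calc ((⋃ i ∈ t, s i).encard : ℝ≥0∞)
      ≤ ((∑ i ∈ ht.toFinset, (s i).encard : ℕ∞) : ℝ≥0∞) := ENat.toENNReal_mono hsum
    _ = ∑ i ∈ ht.toFinset, ((s i).encard : ℝ≥0∞) := map_sum ENat.toENNRealRingHom _ _
    _ ≤ ∑ _i ∈ ht.toFinset, C := Finset.sum_le_sum fun i hi => hC i (ht.mem_toFinset.mp hi)
    _ = t.encard * C := by simp [ht.encard_eq_coe_toFinset_card]

lemma encard_le_encard_mul_of_fibers {α β : Type*} {s : Set α} {t : Set β} {f : α → β}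
    (hf : MapsTo f s t) {C : ℝ≥0∞} (hC : ∀ b ∈ t, ((s ∩ f ⁻¹' {b}).encard : ℝ≥0∞) ≤ C) :
    (s.encard : ℝ≥0∞) ≤ t.encard * C := by
  rcases t.finite_or_infinite with ht | ht
  · refine (ENat.toENNReal_mono (encard_le_encard ?_)).trans (encard_biUnion_le_encard_mul ht _ hC)
    exact fun a ha => mem_biUnion (hf ha) ⟨ha, rfl⟩
  rcases eq_or_ne C 0 with rfl | hC0
  · have hs : s = ∅ := eq_empty_of_forall_notMem fun a ha => by
      have h0 := hC (f a) (hf ha)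
      rw [nonpos_iff_eq_zero, ENat.toENNReal_eq_zero, encard_eq_zero] at h0
      exact h0.subset ⟨ha, rfl⟩
    simp [hs]
  · simp [ht.encard_eq, ENNReal.top_mul hC0]

def stepChains {X : Type*} (F : X → Set X) (x₀ : X) (k : ℕ) : Set (Fin (k + 1) → X) :=
  {g | g 0 = x₀ ∧ ∀ j : Fin k, g j.succ ∈ F (g j.castSucc)}

lemma encard_stepChains_le {X : Type*} (F : X → Set X) (x₀ : X) {C : ℝ≥0∞}
    (hF : ∀ x, ((F x).encard : ℝ≥0∞) ≤ C) (k : ℕ) :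
    ((stepChains F x₀ k).encard : ℝ≥0∞) ≤ C ^ k := by
  induction k with
  | zero =>
    have : (stepChains F x₀ 0).Subsingleton := fun g hg g' hg' => funext fun j => by
      rw [Fin.fin_one_eq_zero j, hg.1, hg'.1]
    simpa using ENat.toENNReal_mono (encard_le_one_iff_subsingleton.mpr this)
  | succ k ih =>
    have hmaps : MapsTo Fin.init (stepChains F x₀ (k + 1)) (stepChains F x₀ k) := fun g hg =>
      ⟨hg.1, fun j => by simpa [Fin.init] using hg.2 j.castSucc⟩
    have hfiber : ∀ h ∈ stepChains F x₀ k,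
        ((stepChains F x₀ (k + 1) ∩ Fin.init ⁻¹' {h}).encard : ℝ≥0∞) ≤ C := by
      intro h _
      have hinj : InjOn (fun g : Fin (k + 2) → X => g (Fin.last _))
          (stepChains F x₀ (k + 1) ∩ Fin.init ⁻¹' {h}) := by
        rintro g ⟨-, hg⟩ g' ⟨-, hg'⟩ hlast
        rw [← Fin.snoc_init_self g, ← Fin.snoc_init_self g', hg.out, hg'.out]
        exact congrArg _ hlast
      have hmapsF : MapsTo (fun g : Fin (k + 2) → X => g (Fin.last _))
          (stepChains F x₀ (k + 1) ∩ Fin.init ⁻¹' {h}) (F (h (Fin.last k))) := by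
        rintro g ⟨hg, rfl⟩
        simpa [Fin.init] using hg.2 (Fin.last k)
      rw [← hinj.encard_image]
      exact (ENat.toENNReal_mono (encard_le_encard hmapsF.image_subset)).trans (hF _)
    calc ((stepChains F x₀ (k + 1)).encard : ℝ≥0∞)
        ≤ (stepChains F x₀ k).encard * C := encard_le_encard_mul_of_fibers hmaps hfiber
      _ ≤ C ^ k * C := by gcongr
      _ = C ^ (k + 1) := (pow_succ _ _).symm

noncomputable def supBallCard (X : Type*) [MetricSpace X] (r : ℝ) : ℝ≥0∞ :=
  ⨆ x : X, ((closedBall x r).encard : ℝ≥0∞)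

lemma encard_closedBall_le_supBallCard {X : Type*} [MetricSpace X] (x : X) (r : ℝ) :
    ((closedBall x r).encard : ℝ≥0∞) ≤ supBallCard X r :=
  le_iSup (fun x => ((closedBall x r).encard : ℝ≥0∞)) x

section PseudoOrbit

variable {X : Type*} [MetricSpace X]

lemma IsPseudoOrbit.dist_add_le {δ : ℝ} {n : ℕ} {x₀ : X} {p : ℕ → X}
    (hp : IsPseudoOrbit id δ n x₀ p) {a k : ℕ} (h : a + k ≤ n) :
    dist (p a) (p (a + k)) ≤ k * δ := by
  induction k with
  | zero => simp
  | succ k ih =>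
    calc dist (p a) (p (a + (k + 1)))
        ≤ dist (p a) (p (a + k)) + dist (p (a + k)) (p (a + k + 1)) := dist_triangle _ _ _
      _ ≤ k * δ + δ := add_le_add (ih (by omega)) (hp.2 _ (by omega))
      _ = (k + 1 : ℕ) * δ := by push_cast; ring

lemma dist_le_orbitDist {n i : ℕ} (p q : ℕ → X) (hi : i ≤ n) :
    dist (p i) (q i) ≤ orbitDist n p q :=
  Finset.le_sup' (fun i => dist (p i) (q i)) (Finset.mem_range.2 (Nat.lt_succ_of_le hi))

lemma orbitDist_le {n : ℕ} {p q : ℕ → X} {r : ℝ} (h : ∀ i ≤ n, dist (p i) (q i) ≤ r) :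
    orbitDist n p q ≤ r :=
  Finset.sup'_le _ _ fun i hi => h i (Nat.lt_succ_iff.mp (Finset.mem_range.mp hi))

lemma encard_le_sepCard {f : X → X} {n : ℕ} {R δ : ℝ} {x₀ : X} {S : Set (ℕ → X)}
    (hS : ∀ p ∈ S, IsPseudoOrbit f δ n x₀ p) (hsep : IsSepFamily n R S) :
    (S.encard : ℝ≥0∞) ≤ sepCard f n R δ x₀ :=
  le_iSup₂_of_le S hS (le_iSup_of_le hsep le_rfl)

end PseudoOrbit

lemma sepCard_id_le_pow {X : Type*} [MetricSpace X] (x₀ : X) {m : ℕ} (hm : 0 < m) (n : ℕ)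
    {δ R : ℝ} (hδ : 0 ≤ δ) (hR : 2 * m * δ < R) :
    sepCard id n R δ x₀ ≤ supBallCard X (m * δ) ^ (n / m) := by
  refine iSup₂_le fun S hS => iSup_le fun hsep => ?_
  set Φ : (ℕ → X) → Fin (n / m + 1) → X := fun p j => p (j * m)
  have hmaps : MapsTo Φ S (stepChains (fun x => closedBall x (m * δ)) x₀ (n / m)) := by
    intro p hp
    refine ⟨by simpa [Φ] using (hS p hp).1, fun j => ?_⟩
    have hj : j * m + m ≤ n :=
      calc j * m + m = (j + 1) * m := (Nat.succ_mul _ _).symm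
        _ ≤ n / m * m := Nat.mul_le_mul_right m j.isLt
        _ ≤ n := Nat.div_mul_le_self n m
    rw [mem_closedBall, dist_comm]
    simpa [Φ, Fin.val_succ, add_mul] using (hS p hp).dist_add_le hj
  have hinj : InjOn Φ S := by
    intro p hp q hq hpq
    by_contra hne
    refine (hR.trans_le (hsep p hp q hq hne)).not_ge (orbitDist_le fun i hi => ?_)
    have hw : p (i / m * m) = q (i / m * m) :=
      congrFun hpq ⟨i / m, Nat.lt_succ_of_le (Nat.div_le_div_right hi)⟩
    have hi' : i / m * m + i % m = i := Nat.div_add_mod' i m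
    have hp' := (hS p hp).dist_add_le (hi'.trans_le hi)
    have hq' := (hS q hq).dist_add_le (hi'.trans_le hi)
    rw [hi'] at hp' hq'
    have hmod : ((i % m : ℕ) : ℝ) * δ ≤ m * δ :=
      mul_le_mul_of_nonneg_right (by exact_mod_cast (Nat.mod_lt i hm).le) hδ
    calc dist (p i) (q i) ≤ dist (p (i / m * m)) (p i) + dist (q (i / m * m)) (q i) := by
          rw [hw]; exact dist_triangle_left _ _ _
      _ ≤ 2 * m * δ := by linarith
  calc (S.encard : ℝ≥0∞) = (Φ '' S).encard := by rw [hinj.encard_image]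
    _ ≤ (stepChains (fun x => closedBall x (m * δ)) x₀ (n / m)).encard :=
        ENat.toENNReal_mono (encard_le_encard hmaps.image_subset)
    _ ≤ _ := encard_stepChains_le _ _ (fun x => encard_closedBall_le_supBallCard x _) _

lemma limsup_elog_div_le {v : ℕ → ℝ≥0∞} {e : ℝ≥0∞} {m : ℕ} (hm : 0 < m)
    (h : ∀ n, v n ≤ e ^ (n / m)) :
    limsup (fun n : ℕ => elog (v n) / n) atTop ≤ elog e / m := by
  refine limsup_le_of_le (by isBoundedDefault) (eventually_atTop.2 ⟨1, fun n hn => ?_⟩)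
  have hn0 : (n : ℝ≥0∞) ≠ 0 := by simp; omega
  calc elog (v n) / n ≤ (n / m : ℕ) * elog e / n := by
        gcongr; rw [← elog_pow]; exact elog_mono (h n)
    _ ≤ elog e / m := by
        rw [ENNReal.div_le_iff hn0 (ENNReal.natCast_ne_top n), ← ENNReal.mul_div_right_comm,
          ENNReal.le_div_iff_mul_le (Or.inl (by simp; omega)) (Or.inl (ENNReal.natCast_ne_top m)),
          mul_comm _ (elog e), mul_assoc]
        gcongr
        exact_mod_cast Nat.div_mul_le_self n m

lemma le_limsup_elog_div {v : ℕ → ℝ≥0∞} {e : ℝ≥0∞} {a b : ℕ} (hb : 0 < b)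
    (h : ∀ k, e ^ k ≤ v (a + b * k)) :
    elog e / (2 * b) ≤ limsup (fun n : ℕ => elog (v n) / n) atTop := by
  refine le_limsup_of_frequently_le (frequently_atTop.2 fun N =>
    ⟨a + b * (N + a + 1), by nlinarith, ?_⟩) (by isBoundedDefault)
  set k := N + a + 1 with hk_def
  have hk : (k : ℝ≥0∞) ≠ 0 := by simp [k]
  have hbk : k ≤ b * k := Nat.le_mul_of_pos_left k hb
  calc elog e / (2 * b) = k * elog e / (k * (2 * b)) :=
        (ENNReal.mul_div_mul_left _ _ hk (ENNReal.natCast_ne_top k)).symm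
    _ ≤ k * elog e / (a + b * k : ℕ) := by
        gcongr
        exact_mod_cast (show a + b * k ≤ k * (2 * b) by linarith)
    _ ≤ elog (v (a + b * k)) / (a + b * k : ℕ) := by
        gcongr; rw [← elog_pow]; exact elog_mono (h k)

theorem coarseEntropyAt_id_eq_zero {X : Type*} [MetricSpace X]
    (h : Tendsto (fun l : ℕ => elog (supBallCard X l) / l) atTop (nhds 0)) (x₀ : X) :
    coarseEntropyAt id x₀ = 0 := by
  refine le_antisymm (iSup₂_le fun δ hδ => ?_) bot_le
  set q := ⌈δ⌉₊
  have hq : 0 < q := Nat.ceil_pos.2 hδ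
  have hlim := ENNReal.Tendsto.const_mul
    (h.comp (tendsto_atTop_mono (fun m => Nat.le_mul_of_pos_left m hq) tendsto_id))
    (Or.inr (ENNReal.natCast_ne_top q))
  rw [mul_zero] at hlim
  refine ge_of_tendsto hlim (eventually_atTop.2 ⟨1, fun m hm => ?_⟩)
  refine (iInf₂_le (2 * m * δ + 1) (by positivity)).trans ?_
  refine (limsup_elog_div_le hm fun n => sepCard_id_le_pow x₀ hm n hδ.le (by linarith)).trans ?_
  have hmq : (m : ℝ) * δ ≤ ((q * m : ℕ) : ℝ) := by
    push_cast
    rw [mul_comm]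
    exact mul_le_mul_of_nonneg_right (Nat.le_ceil δ) (Nat.cast_nonneg m)
  calc elog (supBallCard X (m * δ)) / m ≤ elog (supBallCard X (q * m : ℕ)) / m := by
        gcongr
        exact elog_mono (iSup_mono fun x =>
          ENat.toENNReal_mono (encard_le_encard (closedBall_subset_closedBall hmq)))
    _ = q * (elog (supBallCard X (q * m : ℕ)) / (q * m : ℕ)) := by
        rw [← mul_div_assoc, (Nat.cast_mul q m : ((q * m : ℕ) : ℝ≥0∞) = q * m),
          ENNReal.mul_div_mul_left _ _ (by simp; omega) (ENNReal.natCast_ne_top q)]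

def HasShortPaths (X : Type*) [MetricSpace X] (δ T : ℝ) : Prop :=
  ∀ u v : X, ∃ q : ℕ → X, q 0 = u ∧ (∀ i, dist (q i) (q (i + 1)) ≤ δ) ∧
    ∀ i : ℕ, dist u v ≤ i * T → q i = v

lemma IsQuasiGeodesicSpace.exists_hasShortPaths {X : Type*} [MetricSpace X]
    (h : IsQuasiGeodesicSpace X) :
    ∃ C A : ℝ, 0 < C ∧ 0 ≤ A ∧ ∀ T, 0 ≤ T → HasShortPaths X (C * T + A) T := by
  obtain ⟨C, A, hC, hA, hpath⟩ := h
  refine ⟨C, A, by linarith, hA, fun T hT u v => ?_⟩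
  obtain ⟨p, hp0, hpd, hp⟩ := hpath u v
  have hmem : ∀ i : ℕ, min (i * T) (dist u v) ∈ Icc 0 (dist u v) := fun i =>
    ⟨le_min (by positivity) dist_nonneg, min_le_right _ _⟩
  refine ⟨fun i => p (min (i * T) (dist u v)), by simpa [min_eq_left dist_nonneg] using hp0,
    fun i => ?_, fun i hi => by simpa [min_eq_right hi] using hpd⟩
  have hstep : |min (i * T) (dist u v) - min ((i + 1 : ℕ) * T) (dist u v)| ≤ T :=
    (abs_min_sub_min_le_max _ _ _ _).trans (by push_cast; simp [abs_of_nonneg hT, add_mul, hT])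
  calc dist (p (min (i * T) (dist u v))) (p (min ((i + 1 : ℕ) * T) (dist u v)))
      ≤ C * |min (i * T) (dist u v) - min ((i + 1 : ℕ) * T) (dist u v)| + A :=
        (hp _ (hmem i) _ (hmem (i + 1))).2
    _ ≤ C * T + A := by gcongr

section Concatenation

variable {X : Type*}

def concatAt (a : ℕ → X) (n : ℕ) (b : ℕ → X) : ℕ → X :=
  fun i => if i ≤ n then a i else b (i - n)

def blockSeq (b : ℕ → ℕ → X) (L : ℕ) : ℕ → X :=
  fun i => b (i / L) (i % L)

lemma concatAt_of_le {a b : ℕ → X} {n i : ℕ} (h : i ≤ n) : concatAt a n b i = a i :=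
  if_pos h

lemma concatAt_add {a b : ℕ → X} {n : ℕ} (hab : a n = b 0) (j : ℕ) :
    concatAt a n b (n + j) = b j := by
  rcases j with _ | j
  · simp [concatAt, hab]
  · simp [concatAt]

lemma blockSeq_mul_add (b : ℕ → ℕ → X) {L r : ℕ} (hr : r < L) (j : ℕ) :
    blockSeq b L (L * j + r) = b j r := by
  have hL : 0 < L := by omega
  simp [blockSeq, Nat.mul_add_div hL, Nat.div_eq_of_lt hr, Nat.mod_eq_of_lt hr]

variable [MetricSpace X] {δ : ℝ}

lemma dist_concatAt_succ_le {a b : ℕ → X} {n : ℕ} (hab : a n = b 0)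
    (ha : ∀ i, dist (a i) (a (i + 1)) ≤ δ) (hb : ∀ i, dist (b i) (b (i + 1)) ≤ δ) (i : ℕ) :
    dist (concatAt a n b i) (concatAt a n b (i + 1)) ≤ δ := by
  rcases lt_or_ge i n with hi | hi
  · rw [concatAt_of_le hi.le, concatAt_of_le hi]
    exact ha i
  · obtain ⟨j, rfl⟩ := Nat.exists_eq_add_of_le hi
    rw [concatAt_add hab, add_assoc, concatAt_add hab]
    exact hb j

lemma dist_blockSeq_succ_le {b : ℕ → ℕ → X} {L : ℕ} (hL : 0 < L)
    (hb : ∀ j i, dist (b j i) (b j (i + 1)) ≤ δ) (hjoin : ∀ j, b j L = b (j + 1) 0) (i : ℕ) :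
    dist (blockSeq b L i) (blockSeq b L (i + 1)) ≤ δ := by
  obtain ⟨j, r, hr, rfl⟩ : ∃ j r, r < L ∧ i = L * j + r :=
    ⟨i / L, i % L, Nat.mod_lt i hL, (Nat.div_add_mod i L).symm⟩
  rw [blockSeq_mul_add b hr]
  rcases (Nat.succ_le_of_lt hr).eq_or_lt with hlast | hinner
  · rw [show L * j + r + 1 = L * (j + 1) + 0 by rw [← hlast, Nat.succ_eq_add_one]; ring,
      blockSeq_mul_add b hL, ← hjoin, ← hlast]
    exact hb j r
  · rw [add_assoc, blockSeq_mul_add b hinner]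
    exact hb j r

end Concatenation

lemma HasShortPaths.exists_loops {X : Type*} [MetricSpace X] {δ T : ℝ}
    (hpath : HasShortPaths X δ T) (xc : X) (L : ℕ) :
    ∃ loop : X → ℕ → X, ∀ y, dist xc y ≤ L * T →
      loop y 0 = xc ∧ loop y L = y ∧ loop y (2 * L) = xc ∧
        ∀ i, dist (loop y i) (loop y (i + 1)) ≤ δ := by
  choose out hout0 hout houtE using hpath xc
  choose back hback0 hback hbackE using fun y => hpath y xc
  refine ⟨fun y => concatAt (out y) L (back y), fun y hy => ?_⟩
  have hjoin : out y L = back y 0 := (houtE y L hy).trans (hback0 y).symm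
  refine ⟨by simp [concatAt, hout0], by simp [concatAt, houtE y L hy], ?_,
    dist_concatAt_succ_le hjoin (hout y) (hback y)⟩
  show concatAt (out y) L (back y) (2 * L) = xc
  rw [two_mul, concatAt_add hjoin]
  exact hbackE y L (by rwa [dist_comm])

theorem encard_pow_le_sepCard_id {X : Type*} [MetricSpace X] {δ T R : ℝ}
    (hpath : HasShortPaths X δ T) (hT : 0 < T) (hR : 0 < R) {L : ℕ} (hL : 0 < L) (x₀ xc : X)
    {D : Set X} (hD : D.Pairwise fun y z => R ≤ dist y z) (hDxc : ∀ y ∈ D, dist xc y ≤ L * T) :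
    ∃ n₀ : ℕ, ∀ k : ℕ, (D.encard : ℝ≥0∞) ^ k ≤ sepCard id (n₀ + 2 * L * k) R δ x₀ := by
  obtain ⟨n₀, hn₀⟩ := exists_nat_ge (dist x₀ xc / T)
  rw [div_le_iff₀ hT] at hn₀
  obtain ⟨pre, hpre0, hpre, hpreE⟩ := hpath x₀ xc
  obtain ⟨loop, hloop⟩ := hpath.exists_loops xc L
  refine ⟨n₀, fun k => ?_⟩
  set word : (Fin k → D) → ℕ → X := fun w j => if h : j < k then w ⟨j, h⟩ else xc
  have hword : ∀ w j, dist xc (word w j) ≤ L * T := by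
    intro w j
    by_cases h : j < k
    · simpa [word, h] using hDxc _ (w ⟨j, h⟩).2
    · simp [word, h]; positivity
  -- `P w` runs from `x₀` to `xc`, then for each `j` loops from `xc` to `w j` and back in `2L`
  -- steps, visiting `w j` at step `n₀ + (2L j + L)`.
  set P : (Fin k → D) → ℕ → X := fun w =>
    concatAt pre n₀ (blockSeq (fun j => loop (word w j)) (2 * L))
  have hjoin : ∀ w, pre n₀ = blockSeq (fun j => loop (word w j)) (2 * L) 0 := fun w => by
    simpa [blockSeq, (hloop _ (hword w 0)).1] using hpreE n₀ hn₀
  have hPpath : ∀ w, IsPseudoOrbit id δ (n₀ + 2 * L * k) x₀ (P w) := fun w =>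
    ⟨by simp [P, concatAt, hpre0], fun i _ => dist_concatAt_succ_le (hjoin w) hpre
      (dist_blockSeq_succ_le (by omega) (fun j => (hloop _ (hword w j)).2.2.2)
        (fun j => by rw [(hloop _ (hword w j)).2.2.1, (hloop _ (hword w (j + 1))).1])) i⟩
  have hmark : ∀ w (j : Fin k), P w (n₀ + (2 * L * j + L)) = w j := by
    intro w j
    simp only [P]
    rw [concatAt_add (hjoin w), blockSeq_mul_add _ (by omega), (hloop _ (hword w j)).2.1]
    simp [word]
  have hsep : ∀ w w', w ≠ w' → R ≤ orbitDist (n₀ + 2 * L * k) (P w) (P w') := by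
    intro w w' hne
    obtain ⟨j, hj⟩ := Function.ne_iff.mp hne
    have hjk : 2 * L * j + L ≤ 2 * L * k := by nlinarith [j.isLt]
    refine (hD (w j).2 (w' j).2 (fun h => hj (Subtype.ext h))).trans ?_
    rw [← hmark, ← hmark]
    exact dist_le_orbitDist _ _ (by omega)
  have hinj : Function.Injective P := fun w w' h => by
    by_contra hne
    exact (hR.trans_le (hsep w w' hne)).not_ge (orbitDist_le fun i _ => by rw [h, dist_self])
  calc (D.encard : ℝ≥0∞) ^ k ≤ (Set.range P).encard := by
        simpa using ENat.toENNReal_mono hinj.encard_range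
    _ ≤ sepCard id (n₀ + 2 * L * k) R δ x₀ :=
        encard_le_sepCard (by rintro _ ⟨w, rfl⟩; exact hPpath w)
          (by rintro _ ⟨w, rfl⟩ _ ⟨w', rfl⟩ hne; exact hsep w w' fun h => hne (h ▸ rfl))

lemma exists_separated_subset_encard_le {X : Type*} [MetricSpace X] {A : Set X} (hA : A.Finite)
    {R : ℝ} (hR : 0 ≤ R) :
    ∃ D ⊆ A, D.Pairwise (fun y z => R < dist y z) ∧
      (A.encard : ℝ≥0∞) ≤ D.encard * supBallCard X R := by
  have hpack : packingNumber R.toNNReal A ≠ ⊤ :=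
    ne_top_of_le_ne_top hA.encard_lt_top.ne (packingNumber_le_encard_self A)
  refine ⟨maximalSeparatedSet R.toNNReal A, maximalSeparatedSet_subset, fun y hy z hz hyz => ?_, ?_⟩
  · have : ENNReal.ofReal R < edist y z := isSeparated_maximalSeparatedSet hy hz hyz
    rwa [edist_dist, ENNReal.ofReal_lt_ofReal_iff_of_nonneg hR] at this
  · have hcover := isCover_iff_subset_iUnion_closedBall.mp (isCover_maximalSeparatedSet hpack)
    rw [Real.coe_toNNReal R hR] at hcover
    exact (ENat.toENNReal_mono (encard_le_encard hcover)).trans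
      (encard_biUnion_le_encard_mul (hA.subset maximalSeparatedSet_subset) _
        fun y _ => encard_closedBall_le_supBallCard y R)

lemma exists_separated_subset_elog_encard_ge {X : Type*} [MetricSpace X]
    (hbg : HasBoundedGeometry X) {R r c : ℝ} (hR : 0 < R) (hr : 0 < r) (hc : 0 ≤ c)
    (hball : ENNReal.ofReal (c * r) < elog (supBallCard X r))
    (hsup : supBallCard X R ≤ ENNReal.ofReal (Real.exp (c * r / 2))) :
    ∃ xc : X, ∃ D ⊆ closedBall xc r, D.Pairwise (fun y z => R < dist y z) ∧
      ENNReal.ofReal (c * r / 2) ≤ elog D.encard := by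
  obtain ⟨xc, hxc⟩ : ∃ xc, ENNReal.ofReal (Real.exp (c * r)) < (closedBall xc r).encard := by
    by_contra! h
    exact hball.not_ge ((elog_le_ofReal_iff (by positivity)).2 (iSup_le h))
  obtain ⟨Cr, hCr⟩ := hbg r hr
  obtain ⟨D, hDsub, hDsep, hDcard⟩ :=
    exists_separated_subset_encard_le (finite_of_encard_le_coe (hCr xc)) hR.le
  refine ⟨xc, D, hDsub, hDsep, ?_⟩
  by_contra! h
  refine hxc.not_ge (hDcard.trans ((mul_le_mul' ((elog_le_ofReal_iff (by positivity)).1 h.le)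
    hsup).trans_eq ?_))
  rw [← ENNReal.ofReal_mul (Real.exp_pos _).le, ← Real.exp_add, add_halves]

theorem ofReal_le_limsup_elog_sepCard_id {X : Type*} [MetricSpace X] (hbg : HasBoundedGeometry X)
    {δ T : ℝ} (hpath : HasShortPaths X δ T) (hT : 0 < T) {c : ℝ} (hc : 0 < c)
    (hfreq : ∃ᶠ l : ℕ in atTop, ENNReal.ofReal (c * l) < elog (supBallCard X l))
    (x₀ : X) {R : ℝ} (hR : 0 < R) :
    ENNReal.ofReal (c * T / 16) ≤ limsup (fun n : ℕ => elog (sepCard id n R δ x₀) / n) atTop := by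
  obtain ⟨CR, hCR⟩ := hbg R hR
  obtain ⟨l, hl, hTl, hCRl⟩ := (hfreq.and_eventually
    ((tendsto_natCast_atTop_atTop.eventually_ge_atTop T).and
      (tendsto_natCast_atTop_atTop.eventually_ge_atTop (2 * CR / c)))).exists
  rw [div_le_iff₀ hc] at hCRl
  have hsup : supBallCard X R ≤ ENNReal.ofReal (Real.exp (c * l / 2)) := by
    refine iSup_le fun x => (ENat.toENNReal_mono (hCR x)).trans ?_
    rw [ENat.toENNReal_coe, ← ENNReal.ofReal_natCast]
    exact ENNReal.ofReal_le_ofReal (by linarith [Real.add_one_le_exp (c * l / 2)])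
  obtain ⟨xc, D, hDsub, hDsep, hD⟩ :=
    exists_separated_subset_elog_encard_ge hbg hR (hT.trans_le hTl) hc.le hl hsup
  set L := ⌈(l : ℝ) / T⌉₊
  have hL : 0 < L := Nat.ceil_pos.2 (div_pos (hT.trans_le hTl) hT)
  have hlL : (l : ℝ) ≤ L * T := (div_le_iff₀ hT).1 (Nat.le_ceil _)
  have hLl : (L : ℝ) * T ≤ 2 * l := by
    nlinarith [Nat.ceil_lt_add_one (show 0 ≤ (l : ℝ) / T by positivity),
      div_mul_cancel₀ (l : ℝ) hT.ne']
  obtain ⟨n₀, hn₀⟩ := encard_pow_le_sepCard_id hpath hT hR hL x₀ xc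
    (hDsep.mono' fun _ _ => le_of_lt) fun y hy => (mem_closedBall'.1 (hDsub hy)).trans hlL
  refine le_trans ?_ (le_limsup_elog_div (by omega : 0 < 2 * L) hn₀)
  have h4L : (2 : ℝ≥0∞) * ((2 * L : ℕ) : ℝ≥0∞) = ENNReal.ofReal (4 * L) := by
    rw [ENNReal.ofReal_mul (by norm_num), ENNReal.ofReal_natCast, ENNReal.ofReal_ofNat]
    push_cast; ring
  calc ENNReal.ofReal (c * T / 16) ≤ ENNReal.ofReal (c * l / 2) / ENNReal.ofReal (4 * L) := by
        rw [← ENNReal.ofReal_div_of_pos (by positivity)]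
        refine ENNReal.ofReal_le_ofReal ?_
        rw [le_div_iff₀ (by positivity)]
        nlinarith
    _ ≤ elog D.encard / (2 * ((2 * L : ℕ) : ℝ≥0∞)) := by rw [h4L]; gcongr

theorem coarseEntropyAt_id_eq_top {X : Type*} [MetricSpace X] (hqg : IsQuasiGeodesicSpace X)
    (hbg : HasBoundedGeometry X)
    (hpos : 0 < limsup (fun l : ℕ => elog (supBallCard X l) / l) atTop) (x₀ : X) :
    coarseEntropyAt id x₀ = ⊤ := by
  obtain ⟨C, A, hC, hA, hpath⟩ := hqg.exists_hasShortPaths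
  obtain ⟨c, -, hc0, hc⟩ := ENNReal.lt_iff_exists_real_btwn.1 hpos
  rw [ENNReal.ofReal_pos] at hc0
  have hfreq : ∃ᶠ l : ℕ in atTop, ENNReal.ofReal (c * l) < elog (supBallCard X l) :=
    ((frequently_lt_of_lt_limsup (by isBoundedDefault) hc).and_eventually
      (eventually_ge_atTop 1)).mono fun l ⟨hl, hl1⟩ => by
        rwa [ENNReal.lt_div_iff_mul_lt (Or.inl (by simp; omega)) (Or.inl (ENNReal.natCast_ne_top l)),
          ← ENNReal.ofReal_natCast, ← ENNReal.ofReal_mul hc0.le] at hl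
  refine ENNReal.eq_top_of_forall_nnreal_le fun r => ?_
  set T := 16 * r / c + 1
  have hT : 0 < T := by positivity
  refine le_trans ?_ (le_iSup₂_of_le (C * T + A) (by positivity) (le_iInf₂ fun R hR =>
    ofReal_le_limsup_elog_sepCard_id hbg (hpath T hT.le) hT hc0 hfreq x₀ hR))
  rw [← ENNReal.ofReal_coe_nnreal]
  refine ENNReal.ofReal_le_ofReal ?_
  have : c * T / 16 = r + c / 16 := by simp only [T]; field_simp
  rw [this]
  linarith

/-- Let `X` be a quasigeodesic metric space of bounded geometry. Then:
(i) if `lim_{l→∞} (1/l) log (sup_x |B(x,l)|) = 0`, then `h_∞(X) = 0`;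
(ii) if `limsup_{l→∞} (1/l) log (sup_x |B(x,l)|) > 0`, then `h_∞(X) = ∞`. -/
theorem coarseEntropy_dichotomy_quasiGeodesic_boundedGeometry {X : Type*} [MetricSpace X]
    (hqg : IsQuasiGeodesicSpace X) (hbg : HasBoundedGeometry X) :
    ((Filter.Tendsto
        (fun l : ℕ => elog (⨆ x : X, ((Metric.closedBall x (l : ℝ)).encard : ℝ≥0∞))
          / (l : ℝ≥0∞)) Filter.atTop (nhds 0)) →
      ∀ x₀ : X, coarseEntropyAt (id : X → X) x₀ = 0) ∧
    ((0 < Filter.atTop.limsup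
        fun l : ℕ => elog (⨆ x : X, ((Metric.closedBall x (l : ℝ)).encard : ℝ≥0∞))
          / (l : ℝ≥0∞)) →
      ∀ x₀ : X, coarseEntropyAt (id : X → X) x₀ = ⊤) :=
  ⟨coarseEntropyAt_id_eq_zero, coarseEntropyAt_id_eq_top hqg hbg⟩
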